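/- arXiv:0802.0033 — 4 statements merged into one kernel-verified Lean document; each statement's English description precedes it below -/
import Mathlib

section
/- A finitely generated free group is Hopfian: every surjective endomorphism of a finitely generated free group is an automorphism. -/
/-!
Mal'cev's argument: if `f` is a surjective endomorphism of a finitely generated group `G` and
`Q` is finite, then precomposition with `f` is an injective self-map of the finite set
`G →* Q`, hence a bijection. So every `φ : G →* Q` factors as `ψ ∘ f`, and `φ` kills `ker f`.
If moreover `G` is residually finite, `ker f` is trivial.

Free groups are residually finite: if `g = x₁ ⋯ xₙ` as a word in the generators and its
suffixes `xᵢ ⋯ xₙ` form the finite set `S`, extend each partial map `s ↦ a * s` of `S` to a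
permutation of `S`. The induced action of `g` carries the suffix `1` to `g`, so `g` acts
nontrivially.
-/

theorem Equiv.Perm.exists_extending_mul_left {G : Type*} [Group G] (S : Set G) [Finite S]
    (g : G) : ∃ σ : Equiv.Perm S, ∀ (s : S) (h : g * (s : G) ∈ S), σ s = ⟨g * s, h⟩ := by
  obtain ⟨σ, hσ⟩ := Equiv.Perm.exists_extending_pair
    (fun s : {s : S // g * (s : G) ∈ S} => s.1)
    (fun s => (⟨g * s.1, s.2⟩ : S))
    (fun s t h => Subtype.ext h)
    (fun s t h => Subtype.ext (Subtype.ext (mul_left_cancel (congrArg Subtype.val h))))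
  exact ⟨σ, fun s h => hσ ⟨s, h⟩⟩

instance MonoidHom.finite_of_fg {G Q : Type*} [Group G] [Group.FG G] [Group Q] [Finite Q] :
    Finite (G →* Q) := by
  obtain ⟨s, hs⟩ := Group.FG.out (G := G)
  refine Finite.of_injective (fun ψ : G →* Q => fun x : s => ψ x) fun ψ χ h => ?_
  exact MonoidHom.eq_of_eqOn_dense hs fun x hx => congrFun h ⟨x, hx⟩

theorem Group.ResiduallyFinite.injective_of_surjective {G : Type*} [Group G] [Group.FG G]
    [Group.ResiduallyFinite G] {f : G →* G} (hf : Function.Surjective f) :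
    Function.Injective f := by
  refine (injective_iff_map_eq_one f).2 fun g hg => by_contra fun hg1 => ?_
  obtain ⟨H, hgH⟩ := Group.exists_finiteIndexNormalSubgroup_notMem g hg1
  have hcomp : Function.Surjective fun ψ : G →* G ⧸ H.toSubgroup => ψ.comp f :=
    Finite.injective_iff_surjective.1 fun ψ χ h => (MonoidHom.cancel_right hf).1 h
  obtain ⟨ψ, hψ⟩ := hcomp (QuotientGroup.mk' H.toSubgroup)
  refine hgH ((QuotientGroup.eq_one_iff g).1 ?_)
  rw [← QuotientGroup.mk'_apply, ← hψ, MonoidHom.comp_apply, hg, map_one]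

namespace FreeGroup

variable {α : Type*}

theorem lift_mk_apply_one {S : Set (FreeGroup α)} (σ : α → Equiv.Perm S)
    (hσ : ∀ a (s : S) (h : of a * (s : FreeGroup α) ∈ S), σ a s = ⟨of a * s, h⟩)
    (h1 : (1 : FreeGroup α) ∈ S) (L : List (α × Bool)) (hL : ∀ w, w <:+ L → mk w ∈ S) :
    lift σ (mk L) ⟨1, h1⟩ = ⟨mk L, hL L (List.suffix_refl L)⟩ := by
  induction L with
  | nil => rfl
  | cons x L ih =>
    change lift σ (mk [x] * mk L) _ = _
    rw [_root_.map_mul, Equiv.Perm.mul_apply,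
      ih fun w hw => hL w (hw.trans (List.suffix_cons _ _))]
    obtain ⟨a, _ | _⟩ := x
    · rw [show mk [(a, false)] = (of a)⁻¹ from rfl, _root_.map_inv, lift_apply_of,
        Equiv.Perm.inv_eq_iff_eq]
      have hcancel : of a * mk ((a, false) :: L) = mk L := mul_inv_cancel_left (of a) (mk L)
      rw [hσ _ _ (hcancel ▸ hL L (List.suffix_cons _ _))]
      exact Subtype.ext hcancel.symm
    · rw [show mk [(a, true)] = of a from rfl, lift_apply_of, hσ]
      rfl

instance : Group.ResiduallyFinite (FreeGroup α) := by
  refine Group.residuallyFinite_of_forall_exists_finite_monoidHom fun g hg => ?_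
  obtain ⟨L, rfl⟩ := Quot.exists_rep g
  let S : Set (FreeGroup α) := mk '' {w | w <:+ L}
  have : Finite S := by
    refine Set.Finite.image _ ?_
    simpa only [List.mem_tails] using L.tails.finite_toSet
  choose σ hσ using fun a => Equiv.Perm.exists_extending_mul_left S (of a)
  refine ⟨Equiv.Perm S, inferInstance, inferInstance, lift σ, fun h => hg ?_⟩
  change lift σ (mk L) = 1 at h
  have := lift_mk_apply_one σ hσ ⟨[], List.nil_suffix, rfl⟩ L fun w hw => ⟨w, hw, rfl⟩
  rw [h] at this
  exact (congrArg Subtype.val this).symm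

end FreeGroup

/-- Finitely generated free groups are Hopfian: every surjective endomorphism
of a finitely generated free group is an automorphism (i.e. bijective). -/
theorem stmt_6 {α : Type*} [Finite α] (f : FreeGroup α →* FreeGroup α)
    (hf : Function.Surjective f) : Function.Bijective f :=
  ⟨Group.ResiduallyFinite.injective_of_surjective hf, hf⟩
end

section
/- In the free group F on {a, b, c}, the subgroups H = ⟨c, a⁻¹ba⟩ and K = ⟨a, b⁻¹cb⟩ satisfy: H and K are each free of rank 2, H ∩ K = 1, and the subgroup generated by H and K is all of F (which has rank 3). -/
/-!
Sending `a ↦ 1, b ↦ y, c ↦ x` retracts `F` onto `H ≅ F(x, y)` and maps `K` into `⟨y⁻¹xy⟩`;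
symmetrically, `a ↦ x, b ↦ 1, c ↦ y` retracts `F` onto `K ≅ F(x, y)` and maps `H` into `⟨y⟩`.
Hence `H ∩ K` lies in both `⟨b⁻¹cb⟩` and `⟨q⁻¹cq⟩`, where `q = a⁻¹ba`. These cyclic groups meet
trivially: under `a ↦ L = [[1,0],[1,1]]` and `b, c ↦ T = [[1,1],[0,1]]` into `SL(2, ℤ)`, the element
`q` goes to `P = L⁻¹TL = [[2,1],[-1,0]]`, and `T ^ n = P⁻¹ T ^ m P` forces `n = 0` (compare the
`(1,1)` entries of `P T ^ n = T ^ m P`). Finally `b = a q a⁻¹` gives `H ∨ K = F`.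
-/

open Subgroup

namespace FreeGroup

variable {ι G : Type*} [Group G] {f : ι → G} {r : G →* FreeGroup ι}

theorem leftInverse_lift_of_map_eq_of (hr : ∀ i, r (f i) = of i) :
    Function.LeftInverse r (lift f) :=
  DFunLike.congr_fun (ext_hom (r.comp (lift f)) (MonoidHom.id _) fun i => by simp [hr])

theorem injOn_closure_range_of_map_eq_of (hr : ∀ i, r (f i) = of i) :
    Set.InjOn r (closure (Set.range f)) := by
  rw [← range_lift_eq_closure, MonoidHom.coe_range]
  exact Function.Injective.injOn_range <|
    (leftInverse_lift_of_map_eq_of hr).comp_eq_id ▸ Function.injective_id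

noncomputable def closureRangeMulEquivOfMapEqOf (hr : ∀ i, r (f i) = of i) :
    closure (Set.range f) ≃* FreeGroup ι :=
  (MulEquiv.subgroupCongr range_lift_eq_closure.symm).trans
    (MonoidHom.ofInjective (leftInverse_lift_of_map_eq_of hr).injective).symm

end FreeGroup

theorem Subgroup.inf_le_of_injOn_of_map_le {G G' : Type*} [Group G] [Group G']
    {H K L : Subgroup G} {φ : G →* G'} (hφ : Set.InjOn φ K) (hLK : L ≤ K)
    (hHL : H.map φ ≤ L.map φ) : H ⊓ K ≤ L := by
  rintro g ⟨hgH, hgK⟩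
  obtain ⟨l, hl, hlg⟩ := hHL (mem_map_of_mem φ hgH)
  rwa [← hφ (hLK hl) hgK hlg]

namespace RankThreeJoinExample

open FreeGroup Matrix.SpecialLinearGroup ModularGroup
open scoped MatrixGroups

def a : FreeGroup (Fin 3) := of 0
def b : FreeGroup (Fin 3) := of 1
def c : FreeGroup (Fin 3) := of 2

def H : Subgroup (FreeGroup (Fin 3)) := closure {c, a⁻¹ * b * a}
def K : Subgroup (FreeGroup (Fin 3)) := closure {a, b⁻¹ * c * b}

def retractH : FreeGroup (Fin 3) →* FreeGroup (Fin 2) := lift ![1, of 1, of 0]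
def retractK : FreeGroup (Fin 3) →* FreeGroup (Fin 2) := lift ![of 0, 1, of 1]

theorem H_eq_closure_range : H = closure (Set.range ![c, a⁻¹ * b * a]) := by
  rw [Matrix.range_cons_cons_empty]; rfl

theorem K_eq_closure_range : K = closure (Set.range ![a, b⁻¹ * c * b]) := by
  rw [Matrix.range_cons_cons_empty]; rfl

theorem retractH_apply_gen (i : Fin 2) : retractH (![c, a⁻¹ * b * a] i) = of i := by
  fin_cases i <;> simp [retractH, a, b, c]

theorem retractK_apply_gen (i : Fin 2) : retractK (![a, b⁻¹ * c * b] i) = of i := by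
  fin_cases i <;> simp [retractK, a, b, c]

noncomputable def mulEquivH : H ≃* FreeGroup (Fin 2) :=
  (MulEquiv.subgroupCongr H_eq_closure_range).trans
    (closureRangeMulEquivOfMapEqOf retractH_apply_gen)

noncomputable def mulEquivK : K ≃* FreeGroup (Fin 2) :=
  (MulEquiv.subgroupCongr K_eq_closure_range).trans
    (closureRangeMulEquivOfMapEqOf retractK_apply_gen)

theorem inf_le_zpowers_c_conj_b : H ⊓ K ≤ zpowers (b⁻¹ * c * b) := by
  refine inf_le_of_injOn_of_map_le (φ := retractK) ?_ ?_ ?_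
  · rw [K_eq_closure_range]
    exact injOn_closure_range_of_map_eq_of retractK_apply_gen
  · exact zpowers_le.2 (subset_closure (by simp))
  · rw [H, map_le_iff_le_comap, closure_le]
    rintro _ (rfl | rfl)
    · exact ⟨_, mem_zpowers _, by simp [retractK, b, c]⟩
    · simp [retractK, a, b]

theorem inf_le_zpowers_c_conj_aba : H ⊓ K ≤ zpowers ((a⁻¹ * b * a)⁻¹ * c * (a⁻¹ * b * a)) := by
  rw [inf_comm]
  refine inf_le_of_injOn_of_map_le (φ := retractH) ?_ ?_ ?_
  · rw [H_eq_closure_range]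
    exact injOn_closure_range_of_map_eq_of retractH_apply_gen
  · exact zpowers_le.2 <| mul_mem (mul_mem (inv_mem <| subset_closure (by simp))
      (subset_closure (by simp))) (subset_closure (by simp))
  · rw [K, map_le_iff_le_comap, closure_le]
    rintro _ (rfl | rfl)
    · simp [retractH, a]
    · exact ⟨_, mem_zpowers _, by simp [retractH, a, b, c]⟩

def lowerUnitriangular : SL(2, ℤ) := ⟨!![1, 0; 1, 1], by simp [Matrix.det_fin_two_of]⟩

def conjT : SL(2, ℤ) := ⟨!![2, 1; -1, 0], by simp [Matrix.det_fin_two_of]⟩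

theorem lowerUnitriangular_mul_conjT : lowerUnitriangular * conjT = T * lowerUnitriangular := by
  apply Subtype.ext
  rw [Matrix.SpecialLinearGroup.coe_mul, Matrix.SpecialLinearGroup.coe_mul]
  simp [lowerUnitriangular, conjT, coe_T]

theorem eq_zero_of_T_zpow_eq_conj_zpow {n m : ℤ} (h : T ^ n = (conjT⁻¹ * T * conjT) ^ m) :
    n = 0 := by
  have h' : conjT * T ^ n = T ^ m * conjT := by
    have hconj : (conjT⁻¹ * T * conjT) ^ m = conjT⁻¹ * T ^ m * conjT := by
      simpa using conj_zpow (a := conjT⁻¹) (b := T) (i := m)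
    rw [h, hconj]; group
  have h11 := congrArg (fun M : SL(2, ℤ) => (M : Matrix (Fin 2) (Fin 2) ℤ) 1 1) h'
  rw [Matrix.SpecialLinearGroup.coe_mul, Matrix.SpecialLinearGroup.coe_mul] at h11
  simpa [conjT, coe_T_zpow, Matrix.mul_apply] using h11

def toSL : FreeGroup (Fin 3) →* SL(2, ℤ) := lift ![lowerUnitriangular, T, T]

theorem toSL_aba : toSL (a⁻¹ * b * a) = conjT := by
  simp [toSL, a, b, mul_assoc, inv_mul_eq_iff_eq_mul, lowerUnitriangular_mul_conjT]

theorem toSL_c_conj_aba : toSL ((a⁻¹ * b * a)⁻¹ * c * (a⁻¹ * b * a)) = conjT⁻¹ * T * conjT := by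
  rw [← toSL_aba]
  simp [toSL, c]

theorem zpowers_inf_zpowers_eq_bot :
    zpowers (b⁻¹ * c * b) ⊓ zpowers ((a⁻¹ * b * a)⁻¹ * c * (a⁻¹ * b * a)) = ⊥ := by
  rw [eq_bot_iff_forall]
  rintro g ⟨hgK, hgH⟩
  obtain ⟨n, rfl⟩ := mem_zpowers_iff.1 hgK
  obtain ⟨m, hm⟩ := mem_zpowers_iff.1 hgH
  have hn : n = 0 := by
    refine eq_zero_of_T_zpow_eq_conj_zpow (m := m) ?_
    have hK : toSL ((b⁻¹ * c * b) ^ n) = T ^ n := by simp [toSL, b, c]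
    rw [← hK, ← hm, map_zpow, toSL_c_conj_aba]
  simp [hn]

theorem inf_eq_bot : H ⊓ K = ⊥ :=
  eq_bot_iff.2 <| zpowers_inf_zpowers_eq_bot ▸
    le_inf inf_le_zpowers_c_conj_b inf_le_zpowers_c_conj_aba

theorem sup_eq_top : H ⊔ K = ⊤ := by
  have ha : a ∈ H ⊔ K := mem_sup_right (subset_closure (by simp))
  have hc : c ∈ H ⊔ K := mem_sup_left (subset_closure (by simp))
  have hb : b ∈ H ⊔ K := by
    have haba : a⁻¹ * b * a ∈ H ⊔ K := mem_sup_left (subset_closure (by simp))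
    simpa [mul_assoc] using mul_mem (mul_mem ha haba) (inv_mem ha)
  rw [eq_top_iff, ← closure_range_of, closure_le]
  rintro _ ⟨i, rfl⟩
  fin_cases i
  exacts [ha, hb, hc]

end RankThreeJoinExample

/-- In the free group on `{a, b, c}`, the subgroups `H = ⟨c, a⁻¹ba⟩` and
`K = ⟨a, b⁻¹cb⟩` are free of rank 2, intersect trivially, and generate the
whole free group (which has rank 3). -/
theorem stmt_7 :
    let a : FreeGroup (Fin 3) := FreeGroup.of 0
    let b : FreeGroup (Fin 3) := FreeGroup.of 1
    let c : FreeGroup (Fin 3) := FreeGroup.of 2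
    let H : Subgroup (FreeGroup (Fin 3)) := Subgroup.closure {c, a⁻¹ * b * a}
    let K : Subgroup (FreeGroup (Fin 3)) := Subgroup.closure {a, b⁻¹ * c * b}
    Nonempty (↥H ≃* FreeGroup (Fin 2)) ∧ Nonempty (↥K ≃* FreeGroup (Fin 2)) ∧
      H ⊓ K = ⊥ ∧ H ⊔ K = ⊤ :=
  open RankThreeJoinExample in
  ⟨⟨mulEquivH⟩, ⟨mulEquivK⟩, inf_eq_bot, sup_eq_top⟩
end

section
/- Let ℓ ≥ 1 and let a₁,…,a_ℓ, b₁,…,b_ℓ be positive integers with A = Σ aᵢ and B = Σ bᵢ. Then Σ aᵢbᵢ ≤ (ℓ - 1) + (A - ℓ + 1)(B - ℓ + 1). -/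
/-! Shifting `aᵢ = 1 + αᵢ`, `bᵢ = 1 + βᵢ` with `αᵢ, βᵢ ≥ 0` turns the claim into
`Σ αᵢβᵢ ≤ (Σ αᵢ)(Σ βᵢ)`, which holds because the right side is the full double sum
`Σᵢ Σⱼ αᵢβⱼ` of nonnegative terms, of which the left side is the diagonal. -/

open Finset

theorem Finset.sum_mul_le_sum_mul_sum {ι R : Type*} [CommSemiring R] [PartialOrder R]
    [IsOrderedRing R] (s : Finset ι) {f g : ι → R} (hf : ∀ i ∈ s, 0 ≤ f i)
    (hg : ∀ i ∈ s, 0 ≤ g i) :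
    ∑ i ∈ s, f i * g i ≤ (∑ i ∈ s, f i) * ∑ i ∈ s, g i := by
  rw [sum_mul]
  exact sum_le_sum fun i hi =>
    mul_le_mul_of_nonneg_left (single_le_sum hg hi) (hf i hi)

theorem Finset.sum_mul_eq_sum_sub_one_mul_sub_one {ι R : Type*} [CommRing R] (s : Finset ι)
    (a b : ι → R) :
    ∑ i ∈ s, a i * b i =
      ∑ i ∈ s, (a i - 1) * (b i - 1) + ∑ i ∈ s, a i + ∑ i ∈ s, b i - (#s : R) := by
  rw [← sum_add_distrib, ← sum_add_distrib, card_eq_sum_ones, Nat.cast_sum, ← sum_sub_distrib]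
  exact sum_congr rfl fun i _ => by push_cast; ring

theorem stmt_13_general (ℓ : ℕ) (a b : Fin ℓ → ℕ)
    (ha : ∀ i, 1 ≤ a i) (hb : ∀ i, 1 ≤ b i) :
    (∑ i, (a i : ℤ) * b i) ≤
      ((ℓ : ℤ) - 1) +
        ((∑ i, (a i : ℤ)) - ℓ + 1) * ((∑ i, (b i : ℤ)) - ℓ + 1) := by
  have hα : ∀ i ∈ univ, (0 : ℤ) ≤ a i - 1 := fun i _ => sub_nonneg.2 (by exact_mod_cast ha i)
  have hβ : ∀ i ∈ univ, (0 : ℤ) ≤ b i - 1 := fun i _ => sub_nonneg.2 (by exact_mod_cast hb i)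
  have hdiag := sum_mul_le_sum_mul_sum univ hα hβ
  have hsub : ∀ c : Fin ℓ → ℕ, ∑ i, ((c i : ℤ) - 1) = ∑ i, (c i : ℤ) - ℓ := fun c => by
    simp [sum_sub_distrib]
  rw [hsub, hsub] at hdiag
  rw [sum_mul_eq_sum_sub_one_mul_sub_one, card_univ, Fintype.card_fin]
  linear_combination hdiag

/-- Combinatorial core of the entry-sum lemma: if `ℓ ≥ 1` and
`a₁,…,a_ℓ, b₁,…,b_ℓ` are positive integers with `A = Σ aᵢ` and `B = Σ bᵢ`,
then `Σ aᵢbᵢ ≤ (ℓ - 1) + (A - ℓ + 1)(B - ℓ + 1)`. -/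
theorem stmt_13 (ℓ : ℕ) (hℓ : 1 ≤ ℓ) (a b : Fin ℓ → ℕ)
    (ha : ∀ i, 1 ≤ a i) (hb : ∀ i, 1 ≤ b i) :
    (∑ i, (a i : ℤ) * b i) ≤
      ((ℓ : ℤ) - 1) +
        ((∑ i, (a i : ℤ)) - ℓ + 1) * ((∑ i, (b i : ℤ)) - ℓ + 1) :=
  stmt_13_general ℓ a b ha hb
end

section
/- Let Δ be a finite bipartite graph with black vertex set of size m and white vertex set of size n, having c ≥ 1 connected components and no isolated vertices. Then #edges(Δ) ≤ (c - 1) + (m - c + 1)(n - c + 1). -/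
lemma sum_mul_le_aux {ι : Type*} (s : Finset ι) (a b : ι → ℕ)
    (ha : ∀ i ∈ s, 1 ≤ a i) (hb : ∀ i ∈ s, 1 ≤ b i) :
    (∑ i ∈ s, (a i : ℤ) * b i) ≤ ((s.card : ℤ) - 1)
      + ((∑ i ∈ s, (a i : ℤ)) - s.card + 1) * ((∑ i ∈ s, (b i : ℤ)) - s.card + 1) := by
  induction s using Finset.cons_induction with
  | empty => simp
  | cons i t hit ih =>
    have hA : (1:ℤ) ≤ a i := by exact_mod_cast ha i (Finset.mem_cons_self _ _)
    have hB : (1:ℤ) ≤ b i := by exact_mod_cast hb i (Finset.mem_cons_self _ _)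
    have ha' : ∀ j ∈ t, 1 ≤ a j := fun j hj => ha j (Finset.mem_cons_of_mem hj)
    have hb' : ∀ j ∈ t, 1 ≤ b j := fun j hj => hb j (Finset.mem_cons_of_mem hj)
    have ihh := ih ha' hb'
    have hMa : (t.card : ℤ) ≤ ∑ j ∈ t, (a j : ℤ) := by
      calc (t.card : ℤ) = ∑ j ∈ t, (1:ℤ) := by simp
        _ ≤ _ := Finset.sum_le_sum (fun j hj => by exact_mod_cast ha' j hj)
    have hMb : (t.card : ℤ) ≤ ∑ j ∈ t, (b j : ℤ) := by
      calc (t.card : ℤ) = ∑ j ∈ t, (1:ℤ) := by simp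
        _ ≤ _ := Finset.sum_le_sum (fun j hj => by exact_mod_cast hb' j hj)
    simp only [Finset.sum_cons, Finset.card_cons]
    push_cast
    nlinarith [mul_nonneg (sub_nonneg.2 hMa) (sub_nonneg.2 hB),
      mul_nonneg (sub_nonneg.2 hMb) (sub_nonneg.2 hA)]

/-- Edge bound for a finite bipartite graph with no isolated vertices:
if `Δ` is a bipartite graph on black vertices `B` (of size `m`) and white
vertices `W` (of size `n`) with `c` connected components and no isolated
vertices, then `#edges(Δ) ≤ (c - 1) + (m - c + 1)(n - c + 1)`. -/
theorem stmt_18 {B W : Type*} [Fintype B] [Fintype W]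
    (G : SimpleGraph (B ⊕ W)) [DecidableRel G.Adj] [Fintype G.edgeSet]
    [Fintype G.ConnectedComponent]
    (hbipB : ∀ b b' : B, ¬ G.Adj (Sum.inl b) (Sum.inl b'))
    (hbipW : ∀ w w' : W, ¬ G.Adj (Sum.inr w) (Sum.inr w'))
    (hiso : ∀ v : B ⊕ W, ∃ u, G.Adj v u)
    (m n c : ℕ) (hm : m = Fintype.card B) (hn : n = Fintype.card W)
    (hc : c = Fintype.card G.ConnectedComponent) :
    (G.edgeFinset.card : ℤ) ≤
      ((c : ℤ) - 1) + ((m : ℤ) - c + 1) * ((n : ℤ) - c + 1) := by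
  classical
  let fB : B → G.ConnectedComponent := fun v => G.connectedComponentMk (Sum.inl v)
  let fW : W → G.ConnectedComponent := fun v => G.connectedComponentMk (Sum.inr v)
  let a : G.ConnectedComponent → ℕ := fun K => (Finset.univ.filter fun v : B => fB v = K).card
  let b : G.ConnectedComponent → ℕ := fun K => (Finset.univ.filter fun v : W => fW v = K).card
  let P : Finset (B × W) :=
    Finset.univ.filter fun p : B × W => G.Adj (Sum.inl p.1) (Sum.inr p.2)
  -- edge count equals pair count
  have hcardP : G.edgeFinset.card = P.card := by
    symm
    refine Finset.card_bij (fun p _ => s(Sum.inl p.1, Sum.inr p.2)) ?_ ?_ ?_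
    · intro p hp
      simp only [Finset.mem_filter, Finset.mem_univ, true_and, P] at hp
      simpa [SimpleGraph.mem_edgeFinset] using hp
    · intro p hp q hq h
      simp only [Sym2.eq, Sym2.rel_iff', Prod.mk.injEq, Prod.swap_prod_mk] at h
      rcases h with ⟨h1, h2⟩ | ⟨h1, h2⟩
      · exact Prod.ext (Sum.inl.inj h1) (Sum.inr.inj h2)
      · exact (Sum.inl_ne_inr h1).elim
    · intro e he
      rw [SimpleGraph.mem_edgeFinset] at he
      revert he
      refine Sym2.ind (fun u v => ?_) e
      intro he
      rw [SimpleGraph.mem_edgeSet] at he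
      match u, v, he with
      | Sum.inl x, Sum.inl x', he => exact absurd he (hbipB x x')
      | Sum.inr y, Sum.inr y', he => exact absurd he (hbipW y y')
      | Sum.inl x, Sum.inr y, he =>
        exact ⟨(x, y), by simp only [Finset.mem_filter, Finset.mem_univ, true_and, P]; exact he, rfl⟩
      | Sum.inr y, Sum.inl x, he =>
        exact ⟨(x, y), by simp only [Finset.mem_filter, Finset.mem_univ, true_and, P]; exact he.symm,
          Sym2.eq_swap⟩
  -- sums of a and b
  have hsuma : Fintype.card B = ∑ K : G.ConnectedComponent, a K :=
    Finset.card_eq_sum_card_fiberwise (fun v _ => Finset.mem_univ (fB v))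
  have hsumb : Fintype.card W = ∑ K : G.ConnectedComponent, b K :=
    Finset.card_eq_sum_card_fiberwise (fun v _ => Finset.mem_univ (fW v))
  -- pair count fiberwise
  have hP : P.card = ∑ K : G.ConnectedComponent, (P.filter fun p => fB p.1 = K).card :=
    Finset.card_eq_sum_card_fiberwise (fun p _ => Finset.mem_univ (fB p.1))
  have hfiber : ∀ K : G.ConnectedComponent, (P.filter fun p => fB p.1 = K).card ≤ a K * b K := by
    intro K
    have hsub : (P.filter fun p => fB p.1 = K) ⊆
        (Finset.univ.filter fun v : B => fB v = K) ×ˢ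
        (Finset.univ.filter fun v : W => fW v = K) := by
      intro p hp
      simp only [Finset.mem_filter, Finset.mem_univ, true_and, P] at hp
      obtain ⟨hadj, hK⟩ := hp
      have hK' : fW p.2 = K := by
        rw [← hK]
        exact (SimpleGraph.ConnectedComponent.sound hadj.reachable).symm
      simp [Finset.mem_product, hK, hK']
    calc _ ≤ _ := Finset.card_le_card hsub
      _ = a K * b K := Finset.card_product _ _
  -- each component has at least one black and one white vertex
  have hae : ∀ K : G.ConnectedComponent, 1 ≤ a K := by
    intro K
    rw [Nat.succ_le_iff, Finset.card_pos]
    obtain ⟨v, hv⟩ := K.exists_rep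
    cases v with
    | inl x =>
      refine ⟨x, ?_⟩
      simp only [Finset.mem_filter, Finset.mem_univ, true_and, fB]
      exact hv
    | inr y =>
      obtain ⟨u, hu⟩ := hiso (Sum.inr y)
      cases u with
      | inl x =>
        refine ⟨x, ?_⟩
        simp only [Finset.mem_filter, Finset.mem_univ, true_and, fB]
        rw [← hv]
        exact (SimpleGraph.ConnectedComponent.sound hu.reachable).symm
      | inr y' => exact absurd hu (hbipW y y')
  have hbe : ∀ K : G.ConnectedComponent, 1 ≤ b K := by
    intro K
    rw [Nat.succ_le_iff, Finset.card_pos]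
    obtain ⟨v, hv⟩ := K.exists_rep
    cases v with
    | inr y =>
      refine ⟨y, ?_⟩
      simp only [Finset.mem_filter, Finset.mem_univ, true_and, fW]
      exact hv
    | inl x =>
      obtain ⟨u, hu⟩ := hiso (Sum.inl x)
      cases u with
      | inr y =>
        refine ⟨y, ?_⟩
        simp only [Finset.mem_filter, Finset.mem_univ, true_and, fW]
        rw [← hv]
        exact (SimpleGraph.ConnectedComponent.sound hu.reachable).symm
      | inl x' => exact absurd hu (hbipB x x')
  -- put it together
  have key := sum_mul_le_aux (Finset.univ : Finset G.ConnectedComponent) a b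
    (fun K _ => hae K) (fun K _ => hbe K)
  have hcc : (c : ℤ) = ((Finset.univ : Finset G.ConnectedComponent).card : ℤ) := by
    rw [hc]; norm_cast
  have hmm : (m : ℤ) = ∑ K : G.ConnectedComponent, (a K : ℤ) := by
    rw [hm, hsuma]; push_cast; rfl
  have hnn : (n : ℤ) = ∑ K : G.ConnectedComponent, (b K : ℤ) := by
    rw [hn, hsumb]; push_cast; rfl
  have hle : (G.edgeFinset.card : ℤ) ≤ ∑ K : G.ConnectedComponent, (a K : ℤ) * b K := by
    rw [hcardP, hP]
    push_cast
    exact Finset.sum_le_sum fun K _ => by exact_mod_cast hfiber K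
  rw [hcc, hmm, hnn]
  exact hle.trans key
end
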